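/- Let L be a Lie algebra over a commutative ring Φ in which 2 is invertible, graded by a group G, and let g, g' ∈ G with gg' ≠ g'g. Then [I, J] = 0, where I is the Lie ideal of L generated by L_g and J is the Lie ideal of L generated by L_{g'}. -/

import Mathlib

/-!
For a word `w = z₁ ⋯ zₙ` of homogeneous elements write `ad_w = ad_{z₁} ∘ ⋯ ∘ ad_{zₙ}`. For
`x ∈ L_a`, `y ∈ L_b` with `ab ≠ ba` we show `[x, ad_w [y, t]] = 0` for homogeneous `t`, by strong
induction on the length of `w`, simultaneously for all such pairs. Modulo shorter words the letters
of `w` commute, and `ad_w [y, t]` may be replaced by `[v, t]` with `v = ad_w y ∈ L_{cb}`, where `c`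
is the product of the degrees of the letters. A nonzero value would then force `a` to commute
with the degree of every letter `z` (as `[x, z] ≠ 0`) and with `cb` (as `[x, [v, t]] = [v, [x, t]]`
lies in `L_{acbk} ∩ L_{cbak}`), hence with `b`. So `x` kills every `ad_w y`, that is, the ideal
generated by `L_b`; and the centralizer of that ideal is an ideal containing `L_a`.
-/

open LieAlgebra

section Words

variable (Φ : Type*) {L : Type*} [CommRing Φ] [LieRing L] [LieAlgebra Φ L]

def adWord (w : List L) : Module.End Φ L := (w.map (ad Φ L)).prod

/-- The induction hypothesis of `lie_adWord_lie_eq_zero`, for a fixed pair `x, y`. -/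
def VanishesOnShortWords (H : Set L) (n : ℕ) (x y : L) : Prop :=
  ∀ w : List L, (∀ z ∈ w, z ∈ H) → w.length < n → ∀ t ∈ H, ⁅x, adWord Φ w ⁅y, t⁆⁆ = 0

@[simp]
lemma adWord_nil : adWord Φ ([] : List L) = 1 := rfl

@[simp]
lemma adWord_cons (z : L) (w : List L) : adWord Φ (z :: w) = ad Φ L z * adWord Φ w := by
  simp [adWord]

@[simp]
lemma adWord_append (w w' : List L) : adWord Φ (w ++ w') = adWord Φ w * adWord Φ w' := by
  simp [adWord]

lemma adWord_append_cons_cons (p m : List L) (u z : L) :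
    adWord Φ (p ++ u :: z :: m) = adWord Φ (p ++ z :: u :: m) + adWord Φ (p ++ ⁅u, z⁆ :: m) := by
  simp only [adWord_append, adWord_cons, LieHom.map_lie, Ring.lie_def, mul_sub, sub_mul,
    mul_assoc]
  abel

variable {Φ} {H : Set L} {x y : L}

namespace VanishesOnShortWords

lemma mono {m n : ℕ} (h : VanishesOnShortWords Φ H n x y) (hmn : m ≤ n) :
    VanishesOnShortWords Φ H m x y :=
  fun w hw hlt t ht => h w hw (hlt.trans_le hmn) t ht

lemma lie_left {m : ℕ} (h : VanishesOnShortWords Φ H (m + 1) x y)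
    (hH : ∀ u ∈ H, ∀ v ∈ H, ⁅u, v⁆ ∈ H) {z : L} (hz : z ∈ H) :
    VanishesOnShortWords Φ H m x ⁅z, y⁆ := by
  intro w hw hlt t ht
  have hwz : ∀ u ∈ w ++ [z], u ∈ H := by simpa [or_imp, forall_and] using ⟨hw, hz⟩
  have hz' := h (w ++ [z]) hwz (by simpa using hlt) t ht
  have hy := h w hw (by omega) ⁅z, t⁆ (hH z hz t ht)
  simp only [adWord_append, adWord_cons, adWord_nil, mul_one, Module.End.mul_apply,
    ad_apply] at hz'
  rw [lie_lie, map_sub, lie_sub, hz', hy, sub_zero]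

lemma adWord_left (hH : ∀ u ∈ H, ∀ v ∈ H, ⁅u, v⁆ ∈ H) :
    ∀ (l : List L) {m : ℕ}, (∀ z ∈ l, z ∈ H) → VanishesOnShortWords Φ H (m + l.length) x y →
      VanishesOnShortWords Φ H m x (adWord Φ l y)
  | [], _, _, h => by simpa using h
  | z :: l, m, hl, h => by
    have hl' := adWord_left hH l (m := m + 1) (fun u hu => hl u (by simp [hu]))
      (by simpa [Nat.add_right_comm, Nat.add_assoc] using h)
    simpa using hl'.lie_left hH (hl z (by simp))

lemma lie_adWord_eq_zero {n : ℕ} (h : VanishesOnShortWords Φ H n x y)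
    (hH : ∀ u ∈ H, ∀ v ∈ H, ⁅u, v⁆ ∈ H) (hxy : ⁅x, y⁆ = 0) :
    ∀ w : List L, (∀ z ∈ w, z ∈ H) → w.length ≤ n → ⁅x, adWord Φ w y⁆ = 0
  | [], _, _ => by simpa using hxy
  | z :: w, hw, hlen => by
    have hshort := (h.mono (m := 1 + w.length) (by simp at hlen; omega)).adWord_left hH w
      (fun u hu => hw u (by simp [hu])) [] (by simp) (by simp) z (hw z (by simp))
    simp only [adWord_nil, Module.End.one_apply] at hshort
    rw [adWord_cons, Module.End.mul_apply, ad_apply, ← lie_skew z, lie_neg, hshort, neg_zero]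

lemma lie_adWord_adWord_lie_eq {n : ℕ} (h : VanishesOnShortWords Φ H n x y)
    (hH : ∀ u ∈ H, ∀ v ∈ H, ⁅u, v⁆ ∈ H) {t : L} (ht : t ∈ H) :
    ∀ (l p : List L), (∀ z ∈ l, z ∈ H) → (∀ z ∈ p, z ∈ H) → p.length + l.length ≤ n →
      ⁅x, adWord Φ p (adWord Φ l ⁅y, t⁆)⁆ = ⁅x, adWord Φ p ⁅adWord Φ l y, t⁆⁆
  | [], _, _, _, _ => rfl
  | z :: l, p, hl, hp, hlen => by
    have hz : z ∈ H := hl z (by simp)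
    have hpz : ∀ u ∈ p ++ [z], u ∈ H := by simpa [or_imp, forall_and] using ⟨hp, hz⟩
    have ih := lie_adWord_adWord_lie_eq h hH ht l (p ++ [z])
      (fun u hu => hl u (by simp [hu])) hpz (by simp at hlen ⊢; omega)
    have hshort := (h.mono (m := p.length + 1 + l.length) (by simp at hlen; omega)).adWord_left
      hH l (fun u hu => hl u (by simp [hu])) p hp (by omega) ⁅z, t⁆ (hH z hz t ht)
    simp only [adWord_append, adWord_cons, adWord_nil, mul_one, Module.End.mul_apply,
      ad_apply] at ih ⊢
    rw [ih, lie_lie, map_sub, lie_sub, hshort, sub_zero]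

lemma lie_adWord_append_cons_lie_eq {n : ℕ} (h : VanishesOnShortWords Φ H n x y)
    (hH : ∀ u ∈ H, ∀ v ∈ H, ⁅u, v⁆ ∈ H) {t : L} (ht : t ∈ H) (z : L) :
    ∀ (l₁ l₂ : List L), (∀ u ∈ l₁ ++ z :: l₂, u ∈ H) → (l₁ ++ z :: l₂).length ≤ n →
      ⁅x, adWord Φ (l₁ ++ z :: l₂) ⁅y, t⁆⁆ = ⁅x, adWord Φ (z :: (l₁ ++ l₂)) ⁅y, t⁆⁆ := by
  intro l₁
  induction l₁ using List.reverseRecOn with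
  | nil => simp
  | append_singleton l₁ u ih =>
    intro l₂ hw hlen
    simp only [List.forall_mem_append, List.forall_mem_cons] at hw
    obtain ⟨⟨hl₁, hu, -⟩, hz, hl₂⟩ := hw
    have hmem : ∀ v ∈ l₁ ++ ⁅u, z⁆ :: l₂, v ∈ H := by
      simpa only [List.forall_mem_append, List.forall_mem_cons] using ⟨hl₁, hH u hu z hz, hl₂⟩
    have hshort := h (l₁ ++ ⁅u, z⁆ :: l₂) hmem (by simp at hlen ⊢; omega) t ht
    have hswapped : ∀ v ∈ l₁ ++ z :: u :: l₂, v ∈ H := by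
      simpa only [List.forall_mem_append, List.forall_mem_cons] using ⟨hl₁, hz, hu, hl₂⟩
    rw [List.append_assoc, List.singleton_append, adWord_append_cons_cons, LinearMap.add_apply,
      lie_add, hshort, add_zero, ih (u :: l₂) hswapped (by simpa using hlen)]
    simp

lemma lie_adWord_append_cons_lie_eq_lie_lie {n : ℕ} (h : VanishesOnShortWords Φ H n x y)
    (hH : ∀ u ∈ H, ∀ v ∈ H, ⁅u, v⁆ ∈ H) {t : L} (ht : t ∈ H) {z : L} {l₁ l₂ : List L}
    (hw : ∀ u ∈ l₁ ++ z :: l₂, u ∈ H) (hlen : (l₁ ++ z :: l₂).length ≤ n) :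
    ⁅x, adWord Φ (l₁ ++ z :: l₂) ⁅y, t⁆⁆ = ⁅⁅x, z⁆, adWord Φ (l₁ ++ l₂) ⁅y, t⁆⁆ := by
  have hshort := h (l₁ ++ l₂) (fun u hu => hw u (by simp at hu ⊢; tauto))
    (by simp at hlen ⊢; omega) t ht
  rw [h.lie_adWord_append_cons_lie_eq hH ht z l₁ l₂ hw hlen, adWord_cons, Module.End.mul_apply,
    ad_apply, leibniz_lie, hshort, lie_zero, add_zero]

end VanishesOnShortWords

lemma lie_eq_zero_of_mem_lieSpan (hH : Submodule.span Φ H = ⊤) {T : Set L}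
    (hT : ∀ y ∈ T, ∀ w : List L, (∀ z ∈ w, z ∈ H) → ⁅x, adWord Φ w y⁆ = 0) {m : L}
    (hm : m ∈ LieSubmodule.lieSpan Φ L T) : ⁅x, m⁆ = 0 := by
  suffices hwords : ∀ w : List L, (∀ z ∈ w, z ∈ H) → ⁅x, adWord Φ w m⁆ = 0 by
    simpa using hwords [] (by simp)
  induction hm using LieSubmodule.lieSpan_induction with
  | mem y hy => exact hT y hy
  | zero => simp
  | add u v _ _ hu hv => intro w hw; rw [map_add, lie_add, hu w hw, hv w hw, add_zero]
  | smul r u _ hu => intro w hw; rw [map_smul, lie_smul, hu w hw, smul_zero]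
  | lie z u _ hu =>
    intro w hw
    have hzero : ad Φ L x * adWord Φ w * ad Φ L u = 0 := by
      refine LinearMap.ext_on hH fun s hs => ?_
      have hws : ∀ v ∈ w ++ [s], v ∈ H := by simpa [or_imp, forall_and] using ⟨hw, hs⟩
      have := hu (w ++ [s]) hws
      simp only [adWord_append, adWord_cons, adWord_nil, mul_one, Module.End.mul_apply,
        ad_apply] at this ⊢
      rw [LinearMap.zero_apply, ← lie_skew u s, map_neg, lie_neg, this, neg_zero]
    have := LinearMap.congr_fun hzero z
    simp only [Module.End.mul_apply, ad_apply, LinearMap.zero_apply] at this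
    rw [← lie_skew z u, map_neg, lie_neg, this, neg_zero]

end Words

theorem lieSpan_lie_eq_bot_iff {R L M : Type*} [CommRing R] [LieRing L] [LieAlgebra R L]
    [AddCommGroup M] [Module R M] [LieRingModule L M] [LieModule R L M] {s : Set L}
    {N : LieSubmodule R L M} :
    ⁅LieSubmodule.lieSpan R L s, N⁆ = ⊥ ↔ ∀ x ∈ s, ∀ m ∈ N, ⁅x, m⁆ = 0 := by
  rw [LieSubmodule.lie_eq_bot_iff]
  refine ⟨fun h x hx => h x (LieSubmodule.subset_lieSpan hx), fun h x hx => ?_⟩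
  induction hx using LieSubmodule.lieSpan_induction with
  | mem x hx => exact h x hx
  | zero => simp
  | add u v _ _ hu hv => intro m hm; rw [add_lie, hu m hm, hv m hm, add_zero]
  | smul r u _ hu => intro m hm; rw [smul_lie, hu m hm, smul_zero]
  | lie z u _ hu => intro m hm; rw [lie_lie, hu m hm, lie_zero, hu _ (N.lie_mem hm), sub_zero]

section Graded

variable {Φ L G : Type*} [CommRing Φ] [LieRing L] [LieAlgebra Φ L] {Lg : G → Submodule Φ L}

lemma eq_of_mem_of_mem_of_ne_zero (hind : iSupIndep Lg) {i j : G} {m : L} (hi : m ∈ Lg i)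
    (hj : m ∈ Lg j) (hm : m ≠ 0) : i = j := by
  by_contra hij
  exact hm ((Submodule.disjoint_def.mp (hind.pairwiseDisjoint hij)) m hi hj)

variable [Monoid G]

lemma commute_of_lie_ne_zero (hind : iSupIndep Lg)
    (hgr : ∀ a b : G, ∀ x ∈ Lg a, ∀ y ∈ Lg b, ⁅x, y⁆ ∈ Lg (a * b)) {a b : G} {x y : L}
    (hx : x ∈ Lg a) (hy : y ∈ Lg b) (hxy : ⁅x, y⁆ ≠ 0) : Commute a b := by
  refine eq_of_mem_of_mem_of_ne_zero hind (hgr a b x hx y hy) ?_ hxy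
  rw [← lie_skew]
  exact neg_mem (hgr b a y hy x hx)

lemma commute_of_lie_lie_ne_zero [IsRightCancelMul G] (hind : iSupIndep Lg)
    (hgr : ∀ a b : G, ∀ x ∈ Lg a, ∀ y ∈ Lg b, ⁅x, y⁆ ∈ Lg (a * b)) {a d k : G} {x v t : L}
    (hx : x ∈ Lg a) (hv : v ∈ Lg d) (ht : t ∈ Lg k) (hxv : ⁅x, v⁆ = 0)
    (hS : ⁅x, ⁅v, t⁆⁆ ≠ 0) : Commute a d := by
  have hdeg : a * (d * k) = d * (a * k) := by
    refine eq_of_mem_of_mem_of_ne_zero hind (hgr _ _ x hx _ (hgr _ _ v hv t ht)) ?_ hS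
    rw [leibniz_lie, hxv, zero_lie, zero_add]
    exact hgr _ _ v hv _ (hgr _ _ x hx t ht)
  exact mul_right_cancel (b := k) (by simpa only [mul_assoc] using hdeg)

lemma exists_mem_adWord_mem (hgr : ∀ a b : G, ∀ x ∈ Lg a, ∀ y ∈ Lg b, ⁅x, y⁆ ∈ Lg (a * b))
    {K : Submonoid G} {b : G} {y : L} (hy : y ∈ Lg b) :
    ∀ w : List L, (∀ z ∈ w, ∃ h ∈ K, z ∈ Lg h) → ∃ c ∈ K, adWord Φ w y ∈ Lg (c * b)
  | [], _ => ⟨1, K.one_mem, by simpa using hy⟩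
  | z :: w, hw => by
    obtain ⟨h, hK, hz⟩ := hw z (by simp)
    obtain ⟨c, hc, hv⟩ := exists_mem_adWord_mem hgr hy w (fun u hu => hw u (by simp [hu]))
    refine ⟨h * c, K.mul_mem hK hc, ?_⟩
    simpa [mul_assoc] using hgr _ _ z hz _ hv

lemma lie_mem_iUnion (hgr : ∀ a b : G, ∀ x ∈ Lg a, ∀ y ∈ Lg b, ⁅x, y⁆ ∈ Lg (a * b)) :
    ∀ u ∈ ⋃ i, (Lg i : Set L), ∀ v ∈ ⋃ i, (Lg i : Set L), ⁅u, v⁆ ∈ ⋃ i, (Lg i : Set L) := by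
  simp only [Set.mem_iUnion, SetLike.mem_coe]
  rintro u ⟨a, hu⟩ v ⟨b, hv⟩
  exact ⟨a * b, hgr a b u hu v hv⟩

theorem lie_adWord_lie_eq_zero [IsCancelMul G] (hind : iSupIndep Lg)
    (hgr : ∀ a b : G, ∀ x ∈ Lg a, ∀ y ∈ Lg b, ⁅x, y⁆ ∈ Lg (a * b)) {a b : G}
    (hab : ¬Commute a b) {x y : L} (hx : x ∈ Lg a) (hy : y ∈ Lg b) {w : List L}
    (hw : ∀ z ∈ w, z ∈ ⋃ i, (Lg i : Set L)) {t : L} (ht : t ∈ ⋃ i, (Lg i : Set L)) :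
    ⁅x, adWord Φ w ⁅y, t⁆⁆ = 0 := by
  induction hn : w.length using Nat.strong_induction_on generalizing a b x y w t with
  | _ n ih =>
  have hH := lie_mem_iUnion hgr
  have hV : VanishesOnShortWords Φ (⋃ i, (Lg i : Set L)) n x y :=
    fun w' hw' hlt t' ht' => ih _ hlt hab hx hy hw' ht' rfl
  have hxy : ⁅x, y⁆ = 0 := by
    by_contra hxy
    exact hab (commute_of_lie_ne_zero hind hgr hx hy hxy)
  by_contra hS
  have hletters : ∀ z ∈ w, ∃ h ∈ Submonoid.centralizer {a}, z ∈ Lg h := by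
    intro z hz
    obtain ⟨h, hzh⟩ := Set.mem_iUnion.mp (hw z hz)
    refine ⟨h, Submonoid.mem_centralizer_iff.mpr ?_, hzh⟩
    rintro _ rfl
    obtain ⟨l₁, l₂, rfl⟩ := List.append_of_mem hz
    refine commute_of_lie_ne_zero hind hgr hx hzh fun hxz => hS ?_
    rw [hV.lie_adWord_append_cons_lie_eq_lie_lie hH ht hw hn.le, hxz, zero_lie]
  obtain ⟨c, hc, hv⟩ := exists_mem_adWord_mem hgr hy w hletters
  obtain ⟨k, hk⟩ := Set.mem_iUnion.mp ht
  have hca : a * c = c * a := Submonoid.mem_centralizer_iff.mp hc a rfl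
  have hS' := hV.lie_adWord_adWord_lie_eq hH ht w [] hw (by simp) (by simp [hn])
  simp only [adWord_nil, Module.End.one_apply] at hS'
  have hcb : Commute a (c * b) := commute_of_lie_lie_ne_zero hind hgr hx hv hk
    (hV.lie_adWord_eq_zero hH hxy w hw hn.le) (hS' ▸ hS)
  refine hab (mul_left_cancel (a := c) ?_)
  rw [← mul_assoc, ← hca, mul_assoc, hcb.eq, mul_assoc]

theorem lie_adWord_eq_zero_of_not_commute [IsCancelMul G] (hind : iSupIndep Lg)
    (hgr : ∀ a b : G, ∀ x ∈ Lg a, ∀ y ∈ Lg b, ⁅x, y⁆ ∈ Lg (a * b)) {a b : G}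
    (hab : ¬Commute a b) {x y : L} (hx : x ∈ Lg a) (hy : y ∈ Lg b) {w : List L}
    (hw : ∀ z ∈ w, z ∈ ⋃ i, (Lg i : Set L)) : ⁅x, adWord Φ w y⁆ = 0 := by
  rcases w.eq_nil_or_concat' with rfl | ⟨w, z, rfl⟩
  · by_contra hxy
    exact hab (commute_of_lie_ne_zero hind hgr hx hy (by simpa using hxy))
  · have hw' : ∀ u ∈ w, u ∈ ⋃ i, (Lg i : Set L) := fun u hu => hw u (by simp [hu])
    have := lie_adWord_lie_eq_zero hind hgr hab hx hy hw' (hw z (by simp))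
    simp only [adWord_append, adWord_cons, adWord_nil, mul_one, Module.End.mul_apply, ad_apply]
    rw [← lie_skew z, map_neg, lie_neg, this, neg_zero]

end Graded

theorem lieIdeal_bracket_eq_bot_of_not_commute_general
    {Φ L G : Type*} [CommRing Φ]
    [LieRing L] [LieAlgebra Φ L] [Group G] [DecidableEq G]
    (Lg : G → Submodule Φ L)
    (hdirect : DirectSum.IsInternal Lg)
    (hgrading : ∀ a b : G, ∀ x ∈ Lg a, ∀ y ∈ Lg b, ⁅x, y⁆ ∈ Lg (a * b))
    (g g' : G) (hne : g * g' ≠ g' * g) :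
    ⁅LieSubmodule.lieSpan Φ L (Lg g : Set L),
      LieSubmodule.lieSpan Φ L (Lg g' : Set L)⁆ = (⊥ : LieIdeal Φ L) := by
  have hspan : Submodule.span Φ (⋃ i, (Lg i : Set L)) = ⊤ := by
    rw [← Submodule.iSup_eq_span, hdirect.submodule_iSup_eq_top]
  refine lieSpan_lie_eq_bot_iff.mpr fun x hx m hm => lie_eq_zero_of_mem_lieSpan hspan ?_ hm
  exact fun y hy w hw =>
    lie_adWord_eq_zero_of_not_commute hdirect.submodule_iSupIndep hgrading hne hx hy hw

/-- If `L` is a Lie algebra over a commutative ring `Φ` with `2` invertible, graded by a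
group `G`, and `g g' ≠ g' g`, then the Lie ideals of `L` generated by `L_g` and by `L_{g'}`
commute: `⁅I, J⁆ = 0`. -/
theorem lieIdeal_bracket_eq_bot_of_not_commute
    {Φ L G : Type*} [CommRing Φ] [Invertible (2 : Φ)]
    [LieRing L] [LieAlgebra Φ L] [Group G] [DecidableEq G]
    (Lg : G → Submodule Φ L)
    (hdirect : DirectSum.IsInternal Lg)
    (hgrading : ∀ a b : G, ∀ x ∈ Lg a, ∀ y ∈ Lg b, ⁅x, y⁆ ∈ Lg (a * b))
    (g g' : G) (hne : g * g' ≠ g' * g) :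
    ⁅LieSubmodule.lieSpan Φ L (Lg g : Set L),
      LieSubmodule.lieSpan Φ L (Lg g' : Set L)⁆ = (⊥ : LieIdeal Φ L) :=
  lieIdeal_bracket_eq_bot_of_not_commute_general Lg hdirect hgrading g g' hne
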